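/- arXiv:1612.04127 — 2 statements merged into one kernel-verified Lean document; each statement's English description precedes it below -/
import Mathlib

section
/- Consider the step of the IMEX scheme with Butcher tableaux $A = \begin{pmatrix}0&0&0\\1&0&0\\ 1/2&1/2&0\end{pmatrix}$ (explicit, Heun) and $\hat A = \begin{pmatrix}0&0&0\\1/2&1/2&0\\1/2&0&1/2\end{pmatrix}$ (Crank–Nicolson-like, diagonally implicit), applied to the ODE $V' = P(V) + H(V)$ with smooth $P, H:\mathbb{R}^m\to\mathbb{R}^m$: $V_1 = V_0 + \tfrac{h}{2}P(V_0) + \tfrac{h}{2}P(V_1) + h\,H(V_0)$, then $V_2 = V_0 + \tfrac{h}{2}P(V_0) + \tfrac{h}{2}P(V_2) + \tfrac{h}{2}H(V_0) + \tfrac{h}{2}H(V_1)$. If $(I - \tfrac{h}{2}\partial_V P)$ is invertible for small $h$, the map $h \mapsto V_2(h)$ is smooth near $0$ and satisfies $V_2(h) = V(h) + O(h^3)$ as $h\searrow 0$, where $V$ is the exact solution with $V(0)=V_0$. -/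
open Filter Topology Set Asymptotics ContinuousLinearMap
open scoped ContDiff

noncomputable section IMEXHelpers
variable {E : Type*} [NormedAddCommGroup E] [NormedSpace ℝ E]

def triangularEquiv (L : (ℝ × E) →L[ℝ] E) (A : E ≃L[ℝ] E) (hLA : ∀ v, L (0, v) = A v) :
    (ℝ × E) ≃L[ℝ] (ℝ × E) :=
  ContinuousLinearEquiv.equivOfInverse
    ((fst ℝ ℝ E).prod L)
    ((fst ℝ ℝ E).prod
      ((A.symm : E →L[ℝ] E).comp ((snd ℝ ℝ E) - (fst ℝ ℝ E).smulRight (L (1, 0)))))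
    (fun p => by
      have hsplit : L (p.1, p.2) = p.1 • L (1, 0) + A p.2 := by
        have h1 : (p.1, p.2) = p.1 • ((1:ℝ), (0:E)) + ((0:ℝ), p.2) := by
          simp [Prod.ext_iff]
        rw [h1, map_add, ← map_smul, hLA]
      simp [Prod.ext_iff, hsplit])
    (fun p => by
      have hsplit : ∀ v : E, L (p.1, v) = p.1 • L (1, 0) + A v := fun v => by
        have h1 : (p.1, v) = p.1 • ((1:ℝ), (0:E)) + ((0:ℝ), v) := by
          simp [Prod.ext_iff]
        rw [h1, map_add, ← map_smul, hLA]
      simp [Prod.ext_iff, hsplit])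

theorem coeTriangular (L : (ℝ × E) →L[ℝ] E) (A : E ≃L[ℝ] E) (hLA : ∀ v, L (0, v) = A v) :
    (triangularEquiv L A hLA : (ℝ × E) →L[ℝ] (ℝ × E)) = (fst ℝ ℝ E).prod L := rfl

variable [CompleteSpace E]

lemma exists_branch (P : E → E) (hP : ContDiff ℝ (⊤ : ℕ∞) P) (u : ℝ → E)
    (hu : ∀ᶠ h in 𝓝 (0:ℝ), ContDiffAt ℝ (⊤ : ℕ∞) u h)
    (hinv : ∀ᶠ h in 𝓝 (0:ℝ), ∀ x : E, ∃ e : E ≃L[ℝ] E,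
      (e : E →L[ℝ] E) = ContinuousLinearMap.id ℝ E - (h / 2) • fderiv ℝ P x) :
    ∃ ε > (0:ℝ), ∃ W : ℝ → E, ∀ h ∈ Ioo (-ε) ε,
      ContDiffAt ℝ (⊤ : ℕ∞) W h ∧ W h = (h / 2) • P (W h) + u h := by
  obtain ⟨δ, hδpos, hδ⟩ := Metric.eventually_nhds_iff.mp (hu.and hinv)
  set Ψ : ℝ × E → ℝ × E := fun p => (p.1, p.2 - (p.1 / 2) • P p.2 - u p.1) with hΨdef
  -- key facts at every point with small first coordinate
  have key : ∀ p₀ : ℝ × E, |p₀.1| < δ →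
      ContDiffAt ℝ (⊤ : ℕ∞) Ψ p₀ ∧ ∃ e : (ℝ × E) ≃L[ℝ] (ℝ × E),
        HasFDerivAt Ψ (e : (ℝ × E) →L[ℝ] (ℝ × E)) p₀ := by
    intro p₀ hp₀
    have hmem := hδ (y := p₀.1) (by simpa [Real.dist_eq] using hp₀)
    have hu₀ : ContDiffAt ℝ (⊤ : ℕ∞) u p₀.1 := hmem.1
    -- smoothness of Ψ at p₀
    have hPc : ContDiffAt ℝ (⊤ : ℕ∞) (fun p : ℝ × E => P p.2) p₀ :=
      hP.contDiffAt.comp p₀ contDiffAt_snd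
    have huc : ContDiffAt ℝ (⊤ : ℕ∞) (fun p : ℝ × E => u p.1) p₀ :=
      hu₀.comp p₀ contDiffAt_fst
    have hΨc : ContDiffAt ℝ (⊤ : ℕ∞) Ψ p₀ := by
      apply ContDiffAt.prodMk contDiffAt_fst
      exact (contDiffAt_snd.sub ((contDiffAt_fst.div_const 2).smul hPc)).sub huc
    refine ⟨hΨc, ?_⟩
    -- derivative of Ψ at p₀
    have hPd : HasFDerivAt P (fderiv ℝ P p₀.2) p₀.2 :=
      (hP.differentiable (by simp) p₀.2).hasFDerivAt
    have hud : HasDerivAt u (deriv u p₀.1) p₀.1 :=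
      (hu₀.differentiableAt (by simp)).hasDerivAt
    have t1 : HasFDerivAt (fun p : ℝ × E => (p.1 / 2) • P p.2)
        ((p₀.1 / 2) • ((fderiv ℝ P p₀.2).comp (snd ℝ ℝ E))
          + ((2⁻¹ : ℝ) • fst ℝ ℝ E).smulRight (P p₀.2)) p₀ := by
      have hc : HasFDerivAt (fun p : ℝ × E => p.1 / 2) ((2⁻¹ : ℝ) • fst ℝ ℝ E) p₀ := by
        simpa [div_eq_inv_mul] using hasFDerivAt_fst.const_mul (2⁻¹ : ℝ) (x := p₀)
      exact hc.smul (hPd.comp p₀ hasFDerivAt_snd)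
    have t2 : HasFDerivAt (fun p : ℝ × E => u p.1)
        (((ContinuousLinearMap.id ℝ ℝ).smulRight (deriv u p₀.1)).comp (fst ℝ ℝ E)) p₀ := by
      have := (hasDerivAt_iff_hasFDerivAt.mp hud).comp p₀ (hasFDerivAt_fst (p := p₀))
      exact this
    have hL : HasFDerivAt Ψ ((fst ℝ ℝ E).prod
        ((snd ℝ ℝ E)
          - ((p₀.1 / 2) • ((fderiv ℝ P p₀.2).comp (snd ℝ ℝ E))
            + ((2⁻¹ : ℝ) • fst ℝ ℝ E).smulRight (P p₀.2))
          - ((ContinuousLinearMap.id ℝ ℝ).smulRight (deriv u p₀.1)).comp (fst ℝ ℝ E))) p₀ :=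
      HasFDerivAt.prodMk hasFDerivAt_fst ((hasFDerivAt_snd.sub t1).sub t2)
    obtain ⟨A, hA⟩ := hmem.2 p₀.2
    have hLA : ∀ v : E, ((snd ℝ ℝ E)
          - ((p₀.1 / 2) • ((fderiv ℝ P p₀.2).comp (snd ℝ ℝ E))
            + ((2⁻¹ : ℝ) • fst ℝ ℝ E).smulRight (P p₀.2))
          - ((ContinuousLinearMap.id ℝ ℝ).smulRight (deriv u p₀.1)).comp (fst ℝ ℝ E))
          ((0:ℝ), v) = A v := by
      intro v
      have hAv : A v = v - (p₀.1 / 2) • fderiv ℝ P p₀.2 v := by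
        have := congrArg (fun T : E →L[ℝ] E => T v) hA
        simpa using this
      rw [hAv]
      simp [ContinuousLinearMap.sub_apply, ContinuousLinearMap.add_apply]
    exact ⟨triangularEquiv _ A hLA, by rw [coeTriangular]; exact hL⟩
  -- partial homeomorphism at the base point
  have hbase : |((0:ℝ), u 0).1| < δ := by simpa using hδpos
  obtain ⟨hΨ0, e0, he0⟩ := key ((0:ℝ), u 0) hbase
  set Φ := hΨ0.toOpenPartialHomeomorph Ψ he0 (by simp) with hΦdef
  have hΦcoe : (Φ : ℝ × E → ℝ × E) = Ψ := rfl
  have hΨ00 : Ψ ((0:ℝ), u 0) = ((0:ℝ), (0:E)) := by simp [hΨdef]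
  have htarget : ((0:ℝ), (0:E)) ∈ Φ.target := by
    have := hΨ0.image_mem_toOpenPartialHomeomorph_target he0 (by simp)
    rwa [hΨ00] at this
  obtain ⟨r, hrpos, hr⟩ := Metric.isOpen_iff.mp Φ.open_target _ htarget
  refine ⟨min r δ, lt_min hrpos hδpos, fun h => (Φ.symm (h, 0)).2, ?_⟩
  intro h hh
  have hhr : |h| < r := by
    rw [abs_lt]; constructor
    · exact lt_of_le_of_lt (neg_le_neg (min_le_left r δ)) hh.1
    · exact lt_of_lt_of_le hh.2 (min_le_left r δ)
  have hhδ : |h| < δ := by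
    rw [abs_lt]; constructor
    · exact lt_of_le_of_lt (neg_le_neg (min_le_right r δ)) hh.1
    · exact lt_of_lt_of_le hh.2 (min_le_right r δ)
  have hmem_t : ((h : ℝ), (0:E)) ∈ Φ.target := by
    apply hr
    have hd : dist ((h : ℝ), (0:E)) ((0:ℝ), (0:E)) = |h| := by
      rw [Prod.dist_eq]
      simp [Real.dist_eq]
    rw [Metric.mem_ball, hd]
    exact hhr
  have hq_src : Φ.symm (h, 0) ∈ Φ.source := Φ.map_target hmem_t
  have hΨq : Ψ (Φ.symm (h, 0)) = (h, 0) := by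
    have := Φ.right_inv hmem_t
    rwa [hΦcoe] at this
  have hq1 : (Φ.symm (h, 0)).1 = h := congrArg Prod.fst hΨq
  -- the equation
  have heq : (Φ.symm (h, 0)).2 = (h / 2) • P ((Φ.symm (h, 0)).2) + u h := by
    have h2 := congrArg Prod.snd hΨq
    simp only [hΨdef, hq1] at h2
    have := sub_eq_zero.mpr h2
    -- h2 : q.2 - (h/2) • P q.2 - u h = 0
    have h3 : (Φ.symm (h, 0)).2 - (h / 2) • P ((Φ.symm (h, 0)).2) - u h = 0 := h2
    linear_combination (norm := module) h3
  refine ⟨?_, heq⟩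
  -- smoothness at h
  have hq1' : |(Φ.symm (h, 0)).1| < δ := by rw [hq1]; exact hhδ
  obtain ⟨hΨq_cd, eq_, heq_⟩ := key _ hq1'
  have hsymm : ContDiffAt ℝ (⊤ : ℕ∞) Φ.symm (h, 0) := by
    apply Φ.contDiffAt_symm hmem_t (f₀' := eq_)
    · rw [hΦcoe]; exact heq_
    · rw [hΦcoe]; exact hΨq_cd
  have : ContDiffAt ℝ (⊤ : ℕ∞) (fun h' : ℝ => (Φ.symm (h', 0)).2) h := by
    have h1 : ContDiffAt ℝ (⊤ : ℕ∞) (fun h' : ℝ => ((h' : ℝ), (0:E))) h :=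
      contDiffAt_id.prodMk contDiffAt_const
    exact contDiffAt_snd.comp h (hsymm.comp h h1)
  exact this

variable {E : Type*} [NormedAddCommGroup E] [NormedSpace ℝ E]

lemma isBigO_pow_of_iteratedDeriv_zero (n : ℕ) :
    ∀ (f : ℝ → E), ContDiff ℝ ∞ f → (∀ k < n, iteratedDeriv k f 0 = 0) →
      f =O[𝓝 (0:ℝ)] fun h => h ^ n := by
  induction n with
  | zero =>
    intro f hf _
    simpa using (hf.continuous.tendsto 0).isBigO_one ℝ
  | succ n ih =>
    intro f hf hz
    have hdf : ContDiff ℝ ∞ (deriv f) := (contDiff_infty_iff_deriv.mp hf).2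
    have hzd : ∀ k < n, iteratedDeriv k (deriv f) 0 = 0 := by
      intro k hk
      have := hz (k + 1) (by omega)
      rwa [iteratedDeriv_succ'] at this
    have hO := ih (deriv f) hdf hzd
    obtain ⟨C, hC⟩ := hO.bound
    obtain ⟨δ, hδpos, hδ⟩ := Metric.eventually_nhds_iff.mp hC
    have hf0 : f 0 = 0 := by simpa [iteratedDeriv_zero] using hz 0 (by omega)
    rw [isBigO_iff]
    refine ⟨max C 0, Metric.eventually_nhds_iff.mpr ⟨δ, hδpos, ?_⟩⟩
    intro h hh
    simp only [Real.dist_eq, sub_zero] at hh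
    have hdiff : Differentiable ℝ f := hf.differentiable (by simp)
    have key : ‖f h - f 0‖ ≤ (max C 0 * |h| ^ n) * ‖h - 0‖ := by
      apply Convex.norm_image_sub_le_of_norm_hasDerivWithin_le
        (f' := deriv f) (s := Icc (-|h|) |h|)
      · intro x hx
        exact (hdiff x).hasDerivAt.hasDerivWithinAt
      · intro x hx
        have hx' : |x| ≤ |h| := abs_le.mpr ⟨hx.1, hx.2⟩
        have hb := hδ (y := x) (by simp [Real.dist_eq]; exact lt_of_le_of_lt hx' hh)
        calc ‖deriv f x‖ ≤ C * ‖x ^ n‖ := hb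
          _ ≤ max C 0 * |h| ^ n := by
              rw [norm_pow, Real.norm_eq_abs]
              apply mul_le_mul (le_max_left _ _)
                (pow_le_pow_left₀ (abs_nonneg x) hx' n) (by positivity)
                (le_max_right _ _)
      · exact convex_Icc _ _
      · constructor <;> simp [abs_nonneg, neg_nonpos.mpr (abs_nonneg h)]
      · constructor
        · exact neg_abs_le h
        · exact le_abs_self h
    rw [hf0, sub_zero, sub_zero] at key
    calc ‖f h‖ ≤ max C 0 * |h| ^ n * ‖h‖ := key
      _ = max C 0 * ‖h ^ (n+1)‖ := by
          rw [norm_pow, Real.norm_eq_abs, pow_succ]; ring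

end IMEXHelpers

/-- Second-order local consistency of the IMEX Heun/Crank–Nicolson coupling for
`V' = P(V) + H(V)`: the stage equations
`V₁ = V₀ + (h/2)P(V₀) + (h/2)P(V₁) + h H(V₀)`,
`V₂ = V₀ + (h/2)P(V₀) + (h/2)P(V₂) + (h/2)H(V₀) + (h/2)H(V₁)`
admit, under invertibility of `I - (h/2)∂_V P` for small `h`, a smooth solution
branch `h ↦ V₂(h)` near `0` with `V₂(h) = V(h) + O(h³)` as `h ↘ 0`. -/
theorem imex_heun_crank_nicolson_second_order {m : ℕ}
    (P H : (Fin m → ℝ) → (Fin m → ℝ))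
    (hP : ContDiff ℝ (⊤ : ℕ∞) P) (hH : ContDiff ℝ (⊤ : ℕ∞) H)
    (V0 : Fin m → ℝ)
    (Vex : ℝ → (Fin m → ℝ)) (hVex0 : Vex 0 = V0)
    (hVex : ∀ t, HasDerivAt Vex (P (Vex t) + H (Vex t)) t)
    (hinv : ∀ᶠ h in 𝓝 (0 : ℝ), ∀ x : Fin m → ℝ,
      ∃ e : (Fin m → ℝ) ≃L[ℝ] (Fin m → ℝ),
        (e : (Fin m → ℝ) →L[ℝ] (Fin m → ℝ)) =
          ContinuousLinearMap.id ℝ (Fin m → ℝ) - (h / 2) • fderiv ℝ P x) :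
    ∃ ε > (0 : ℝ), ∃ V1 V2 : ℝ → (Fin m → ℝ),
      ContDiffOn ℝ (⊤ : ℕ∞) V2 (Ioo (-ε) ε) ∧
      (∀ h ∈ Ioo (-ε) ε,
        V1 h = V0 + (h / 2) • P V0 + (h / 2) • P (V1 h) + h • H V0 ∧
        V2 h = V0 + (h / 2) • P V0 + (h / 2) • P (V2 h)
          + (h / 2) • H V0 + (h / 2) • H (V1 h)) ∧
      (fun h => V2 h - Vex h) =O[𝓝[>] (0 : ℝ)] fun h => h ^ 3 := by
  have hP' : ContDiff ℝ ∞ P := hP.of_le (by simp)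
  have hH' : ContDiff ℝ ∞ H := hH.of_le (by simp)
  have hVd : Differentiable ℝ Vex := fun t => (hVex t).differentiableAt
  have hderiv : deriv Vex = fun t => P (Vex t) + H (Vex t) := funext fun t => (hVex t).deriv
  -- smoothness of the exact solution
  have hVexS : ContDiff ℝ ∞ Vex := by
    rw [contDiff_infty]
    intro n
    induction n with
    | zero => exact contDiff_zero.mpr hVd.continuous
    | succ n ih =>
      have h1 : ContDiff ℝ ((n : WithTop ℕ∞) + 1) Vex := by
        rw [contDiff_succ_iff_deriv]
        refine ⟨hVd, by simp, ?_⟩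
        rw [hderiv]
        exact ((hP'.of_le (by exact_mod_cast le_top)).comp ih).add
          ((hH'.of_le (by exact_mod_cast le_top)).comp ih)
      have : ((n + 1 : ℕ) : WithTop ℕ∞) = (n : WithTop ℕ∞) + 1 := by push_cast; ring
      rw [this]; exact h1
  -- first stage
  obtain ⟨ε₁, hε₁, V1, hV1⟩ := exists_branch P hP
      (fun h => V0 + (h / 2) • P V0 + h • H V0)
      (Eventually.of_forall fun h =>
        (((contDiffAt_const).add ((contDiffAt_id.div_const 2).smul contDiffAt_const)).add
          (contDiffAt_id.smul contDiffAt_const)))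
      hinv
  have h0mem1 : (0:ℝ) ∈ Ioo (-ε₁) ε₁ := ⟨neg_lt_zero.mpr hε₁, hε₁⟩
  have hV10 : V1 0 = V0 := by
    have := (hV1 0 h0mem1).2
    simpa using this
  -- second stage
  obtain ⟨ε₂, hε₂, V2, hV2⟩ := exists_branch P hP
      (fun h => V0 + (h / 2) • P V0 + (h / 2) • H V0 + (h / 2) • H (V1 h))
      (by
        filter_upwards [Ioo_mem_nhds (neg_lt_zero.mpr hε₁) hε₁] with h hmem
        exact ((((contDiffAt_const).add
            ((contDiffAt_id.div_const 2).smul contDiffAt_const)).add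
            ((contDiffAt_id.div_const 2).smul contDiffAt_const)).add
            ((contDiffAt_id.div_const 2).smul (hH.contDiffAt.comp h (hV1 h hmem).1))))
      hinv
  have h0mem2 : (0:ℝ) ∈ Ioo (-ε₂) ε₂ := ⟨neg_lt_zero.mpr hε₂, hε₂⟩
  have hV20 : V2 0 = V0 := by
    have := (hV2 0 h0mem2).2
    simpa using this
  refine ⟨min ε₁ ε₂, lt_min hε₁ hε₂, V1, V2, ?_, ?_, ?_⟩
  · -- smoothness of V2
    intro h hh
    have hh2 : h ∈ Ioo (-ε₂) ε₂ :=
      ⟨lt_of_le_of_lt (neg_le_neg (min_le_right ε₁ ε₂)) hh.1,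
       lt_of_lt_of_le hh.2 (min_le_right ε₁ ε₂)⟩
    exact ((hV2 h hh2).1).contDiffWithinAt
  · -- the stage equations
    intro h hh
    have hh1 : h ∈ Ioo (-ε₁) ε₁ :=
      ⟨lt_of_le_of_lt (neg_le_neg (min_le_left ε₁ ε₂)) hh.1,
       lt_of_lt_of_le hh.2 (min_le_left ε₁ ε₂)⟩
    have hh2 : h ∈ Ioo (-ε₂) ε₂ :=
      ⟨lt_of_le_of_lt (neg_le_neg (min_le_right ε₁ ε₂)) hh.1,
       lt_of_lt_of_le hh.2 (min_le_right ε₁ ε₂)⟩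
    constructor
    · nth_rewrite 1 [(hV1 h hh1).2]; abel
    · nth_rewrite 1 [(hV2 h hh2).2]; abel
  · -- the O(h^3) estimate
    have honeinf : (1 : WithTop ℕ∞) ≤ ∞ := by exact_mod_cast le_top
    set E1 : ℝ → (Fin m → ℝ) := fun h => V0 + (h/2) • P V0 + h • H V0 + (h/2) • P (Vex h) - Vex h
      with hE1def
    set G : ℝ → (Fin m → ℝ) := fun h => V0 + (h/2) • P V0 + (h/2) • H V0 + (h/2) • H (Vex h)
      + (h/2) • P (Vex h) - Vex h with hGdef
    have hPVex : ∀ t, HasDerivAt (fun s => P (Vex s))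
        (fderiv ℝ P (Vex t) (P (Vex t) + H (Vex t))) t := fun t =>
      ((hP'.differentiable (by simp) (Vex t)).hasFDerivAt).comp_hasDerivAt t (hVex t)
    have hHVex : ∀ t, HasDerivAt (fun s => H (Vex s))
        (fderiv ℝ H (Vex t) (P (Vex t) + H (Vex t))) t := fun t =>
      ((hH'.differentiable (by simp) (Vex t)).hasFDerivAt).comp_hasDerivAt t (hVex t)
    -- E1 = O(h²)
    have hE1d : ∀ t, HasDerivAt E1 ((1/2 : ℝ) • P V0 + H V0 + ((1/2 : ℝ) • P (Vex t)
        + (t/2) • fderiv ℝ P (Vex t) (P (Vex t) + H (Vex t)))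
        - (P (Vex t) + H (Vex t))) t := by
      intro t
      have base := ((((hasDerivAt_const t V0).add
          (((hasDerivAt_id t).div_const 2).smul_const (P V0))).add
          ((hasDerivAt_id t).smul_const (H V0))).add
          (((hasDerivAt_id t).div_const 2).smul (hPVex t))).sub (hVex t)
      simp only [id_eq] at base
      rw [hE1def]
      exact base.congr_deriv (by module)
    have hE1smooth : ContDiff ℝ ∞ E1 := by
      rw [hE1def]
      exact ((((contDiff_const).add ((contDiff_id.div_const 2).smul contDiff_const)).add
        (contDiff_id.smul contDiff_const)).add
        ((contDiff_id.div_const 2).smul (hP'.comp hVexS))).sub hVexS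
    have hE1O : E1 =O[𝓝 (0:ℝ)] fun h => h ^ 2 := by
      apply isBigO_pow_of_iteratedDeriv_zero 2 E1 hE1smooth
      intro k hk
      interval_cases k
      · rw [iteratedDeriv_zero]; simp [hE1def, hVex0]
      · rw [iteratedDeriv_one, (hE1d 0).deriv, hVex0]
        module
    -- G = O(h³)
    have hDHs : ContDiff ℝ ∞ (fun t => fderiv ℝ H (Vex t) (P (Vex t) + H (Vex t))) := by
      have h1 : ContDiff ℝ ∞ (fderiv ℝ H) := hH.fderiv_right (by simp)
      exact (h1.comp hVexS).clm_apply ((hP'.comp hVexS).add (hH'.comp hVexS))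
    have hDPs : ContDiff ℝ ∞ (fun t => fderiv ℝ P (Vex t) (P (Vex t) + H (Vex t))) := by
      have h1 : ContDiff ℝ ∞ (fderiv ℝ P) := hP.fderiv_right (by simp)
      exact (h1.comp hVexS).clm_apply ((hP'.comp hVexS).add (hH'.comp hVexS))
    have hGd : ∀ t, HasDerivAt G ((1/2:ℝ) • P V0 + (1/2:ℝ) • H V0
        + ((1/2:ℝ) • H (Vex t) + (t/2) • fderiv ℝ H (Vex t) (P (Vex t) + H (Vex t)))
        + ((1/2:ℝ) • P (Vex t) + (t/2) • fderiv ℝ P (Vex t) (P (Vex t) + H (Vex t)))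
        - (P (Vex t) + H (Vex t))) t := by
      intro t
      have base := (((((hasDerivAt_const t V0).add
          (((hasDerivAt_id t).div_const 2).smul_const (P V0))).add
          (((hasDerivAt_id t).div_const 2).smul_const (H V0))).add
          (((hasDerivAt_id t).div_const 2).smul (hHVex t))).add
          (((hasDerivAt_id t).div_const 2).smul (hPVex t))).sub (hVex t)
      simp only [id_eq] at base
      rw [hGdef]
      exact base.congr_deriv (by module)
    have hGsmooth : ContDiff ℝ ∞ G := by
      rw [hGdef]
      exact (((((contDiff_const).add ((contDiff_id.div_const 2).smul contDiff_const)).add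
        ((contDiff_id.div_const 2).smul contDiff_const)).add
        ((contDiff_id.div_const 2).smul (hH'.comp hVexS))).add
        ((contDiff_id.div_const 2).smul (hP'.comp hVexS))).sub hVexS
    have hGO : G =O[𝓝 (0:ℝ)] fun h => h ^ 3 := by
      apply isBigO_pow_of_iteratedDeriv_zero 3 G hGsmooth
      have hg1deriv : deriv G = fun t => ((1/2:ℝ) • P V0 + (1/2:ℝ) • H V0
        + ((1/2:ℝ) • H (Vex t) + (t/2) • fderiv ℝ H (Vex t) (P (Vex t) + H (Vex t)))
        + ((1/2:ℝ) • P (Vex t) + (t/2) • fderiv ℝ P (Vex t) (P (Vex t) + H (Vex t)))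
        - (P (Vex t) + H (Vex t))) := funext fun t => (hGd t).deriv
      intro k hk
      interval_cases k
      · rw [iteratedDeriv_zero]; simp [hGdef, hVex0]
      · rw [iteratedDeriv_one, (hGd 0).deriv, hVex0]
        module
      · rw [iteratedDeriv_succ, iteratedDeriv_one, hg1deriv]
        have hDHd : HasDerivAt (fun t => fderiv ℝ H (Vex t) (P (Vex t) + H (Vex t)))
            (deriv (fun t => fderiv ℝ H (Vex t) (P (Vex t) + H (Vex t))) 0) 0 :=
          (hDHs.differentiable (by simp) 0).hasDerivAt
        have hDPd : HasDerivAt (fun t => fderiv ℝ P (Vex t) (P (Vex t) + H (Vex t)))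
            (deriv (fun t => fderiv ℝ P (Vex t) (P (Vex t) + H (Vex t))) 0) 0 :=
          (hDPs.differentiable (by simp) 0).hasDerivAt
        have A := hasDerivAt_const (0:ℝ) ((1/2:ℝ) • P V0)
        have B := hasDerivAt_const (0:ℝ) ((1/2:ℝ) • H V0)
        have C := ((hHVex 0).const_smul (1/2:ℝ)).add
          (((hasDerivAt_id (0:ℝ)).div_const 2).smul hDHd)
        have D := ((hPVex 0).const_smul (1/2:ℝ)).add
          (((hasDerivAt_id (0:ℝ)).div_const 2).smul hDPd)
        have Efn := (hPVex 0).add (hHVex 0)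
        have b1 := (((A.add B).add C).add D).sub Efn
        have b2 : HasDerivAt (fun t : ℝ => (1/2:ℝ) • P V0 + (1/2:ℝ) • H V0
            + ((1/2:ℝ) • H (Vex t) + (t/2) • fderiv ℝ H (Vex t) (P (Vex t) + H (Vex t)))
            + ((1/2:ℝ) • P (Vex t) + (t/2) • fderiv ℝ P (Vex t) (P (Vex t) + H (Vex t)))
            - (P (Vex t) + H (Vex t)))
            (0 + 0
              + ((1/2:ℝ) • fderiv ℝ H (Vex 0) (P (Vex 0) + H (Vex 0))
                + ((0/2:ℝ) • deriv (fun t => fderiv ℝ H (Vex t) (P (Vex t) + H (Vex t))) 0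
                  + (1/2:ℝ) • fderiv ℝ H (Vex 0) (P (Vex 0) + H (Vex 0))))
              + ((1/2:ℝ) • fderiv ℝ P (Vex 0) (P (Vex 0) + H (Vex 0))
                + ((0/2:ℝ) • deriv (fun t => fderiv ℝ P (Vex t) (P (Vex t) + H (Vex t))) 0
                  + (1/2:ℝ) • fderiv ℝ P (Vex 0) (P (Vex 0) + H (Vex 0))))
              - (fderiv ℝ P (Vex 0) (P (Vex 0) + H (Vex 0))
                + fderiv ℝ H (Vex 0) (P (Vex 0) + H (Vex 0)))) 0 := b1
        rw [b2.deriv, hVex0]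
        module
    -- Lipschitz constants for P and H near V0
    obtain ⟨KP, tP, htP, hKP⟩ :=
      ((hP.contDiffAt : ContDiffAt ℝ (⊤ : ℕ∞) P V0).of_le (by simp)).exists_lipschitzOnWith
    obtain ⟨KH, tH, htH, hKH⟩ :=
      ((hH.contDiffAt : ContDiffAt ℝ (⊤ : ℕ∞) H V0).of_le (by simp)).exists_lipschitzOnWith
    have hV1cont : ContinuousAt V1 0 := ((hV1 0 h0mem1).1).continuousAt
    have hV2cont : ContinuousAt V2 0 := ((hV2 0 h0mem2).1).continuousAt
    have hVexcont : ContinuousAt Vex 0 := (hVex 0).differentiableAt.continuousAt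
    have evV1P : ∀ᶠ h in 𝓝 (0:ℝ), V1 h ∈ tP := by
      apply hV1cont.eventually_mem; rw [hV10]; exact htP
    have evV1H : ∀ᶠ h in 𝓝 (0:ℝ), V1 h ∈ tH := by
      apply hV1cont.eventually_mem; rw [hV10]; exact htH
    have evV2P : ∀ᶠ h in 𝓝 (0:ℝ), V2 h ∈ tP := by
      apply hV2cont.eventually_mem; rw [hV20]; exact htP
    have evVexP : ∀ᶠ h in 𝓝 (0:ℝ), Vex h ∈ tP := by
      apply hVexcont.eventually_mem; rw [hVex0]; exact htP
    have evVexH : ∀ᶠ h in 𝓝 (0:ℝ), Vex h ∈ tH := by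
      apply hVexcont.eventually_mem; rw [hVex0]; exact htH
    have evsmall : ∀ᶠ h in 𝓝 (0:ℝ), |h| * (KP:ℝ) ≤ 1 := by
      have h1 : Tendsto (fun h : ℝ => |h| * (KP:ℝ)) (𝓝 0) (𝓝 (|(0:ℝ)| * (KP:ℝ))) :=
        ((continuous_abs).mul continuous_const).tendsto 0
      simp only [abs_zero, zero_mul] at h1
      filter_upwards [h1 (Iic_mem_nhds one_pos)] with h hh
      exact hh
    -- first-order consistency of V1
    have step1 : ∀ᶠ h in 𝓝 (0:ℝ), ‖V1 h - Vex h‖ ≤ 2 * ‖E1 h‖ := by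
      filter_upwards [Ioo_mem_nhds (neg_lt_zero.mpr hε₁) hε₁, evV1P, evVexP, evsmall]
        with h hIoo hm1 hm2 hsm
      have hid : V1 h - Vex h = (h/2) • (P (V1 h) - P (Vex h)) + E1 h := by
        simp only [hE1def]
        nth_rewrite 1 [(hV1 h hIoo).2]
        module
      have hlip : ‖P (V1 h) - P (Vex h)‖ ≤ (KP:ℝ) * ‖V1 h - Vex h‖ := by
        rw [← dist_eq_norm, ← dist_eq_norm]
        exact hKP.dist_le_mul _ hm1 _ hm2
      have hbound : ‖(h/2) • (P (V1 h) - P (Vex h))‖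
          ≤ |h| * (KP:ℝ) * ‖V1 h - Vex h‖ / 2 := by
        rw [norm_smul, Real.norm_eq_abs, abs_div, abs_two]
        calc |h| / 2 * ‖P (V1 h) - P (Vex h)‖
            ≤ |h| / 2 * ((KP:ℝ) * ‖V1 h - Vex h‖) := by
              apply mul_le_mul_of_nonneg_left hlip (by positivity)
          _ = |h| * (KP:ℝ) * ‖V1 h - Vex h‖ / 2 := by ring
      have htri := norm_add_le ((h/2) • (P (V1 h) - P (Vex h))) (E1 h)
      rw [← hid] at htri
      nlinarith [norm_nonneg (V1 h - Vex h), norm_nonneg (E1 h),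
        mul_le_mul_of_nonneg_right hsm (norm_nonneg (V1 h - Vex h))]
    have hO1 : (fun h => V1 h - Vex h) =O[𝓝 (0:ℝ)] fun h => h ^ 2 :=
      (IsBigO.of_bound 2 (by
        filter_upwards [step1] with h hh
        simpa using hh)).trans hE1O
    have hOH : (fun h => H (V1 h) - H (Vex h)) =O[𝓝 (0:ℝ)] fun h => h ^ 2 := by
      refine (IsBigO.of_bound (KH:ℝ) ?_).trans hO1
      filter_upwards [evV1H, evVexH] with h hm1 hm2
      rw [← dist_eq_norm (H (V1 h)), ← dist_eq_norm (V1 h)]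
      exact hKH.dist_le_mul _ hm1 _ hm2
    have hsmul : (fun h => (h/2) • (H (V1 h) - H (Vex h))) =O[𝓝 (0:ℝ)] fun h => h ^ 3 := by
      have hhalf : (fun h : ℝ => h/2) =O[𝓝 (0:ℝ)] fun h => h :=
        IsBigO.of_bound 1 (Eventually.of_forall fun h => by
          rw [Real.norm_eq_abs, Real.norm_eq_abs, abs_div, abs_two, one_mul]
          linarith [abs_nonneg h])
      have hprod := hhalf.smul hOH
      have heq3 : (fun h : ℝ => h • h ^ 2) = fun h : ℝ => h ^ 3 :=
        funext fun h => by rw [smul_eq_mul]; ring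
      rwa [heq3] at hprod
    -- second-order consistency of V2
    have step2 : ∀ᶠ h in 𝓝 (0:ℝ), ‖V2 h - Vex h‖
        ≤ 2 * ‖(h/2) • (H (V1 h) - H (Vex h)) + G h‖ := by
      filter_upwards [Ioo_mem_nhds (neg_lt_zero.mpr hε₂) hε₂, evV2P, evVexP, evsmall]
        with h hIoo hm1 hm2 hsm
      have hid : V2 h - Vex h = (h/2) • (P (V2 h) - P (Vex h))
          + ((h/2) • (H (V1 h) - H (Vex h)) + G h) := by
        simp only [hGdef]
        nth_rewrite 1 [(hV2 h hIoo).2]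
        module
      have hlip : ‖P (V2 h) - P (Vex h)‖ ≤ (KP:ℝ) * ‖V2 h - Vex h‖ := by
        rw [← dist_eq_norm, ← dist_eq_norm]
        exact hKP.dist_le_mul _ hm1 _ hm2
      have hbound : ‖(h/2) • (P (V2 h) - P (Vex h))‖
          ≤ |h| * (KP:ℝ) * ‖V2 h - Vex h‖ / 2 := by
        rw [norm_smul, Real.norm_eq_abs, abs_div, abs_two]
        calc |h| / 2 * ‖P (V2 h) - P (Vex h)‖
            ≤ |h| / 2 * ((KP:ℝ) * ‖V2 h - Vex h‖) := by
              apply mul_le_mul_of_nonneg_left hlip (by positivity)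
          _ = |h| * (KP:ℝ) * ‖V2 h - Vex h‖ / 2 := by ring
      have htri := norm_add_le ((h/2) • (P (V2 h) - P (Vex h)))
        ((h/2) • (H (V1 h) - H (Vex h)) + G h)
      rw [← hid] at htri
      nlinarith [norm_nonneg (V2 h - Vex h),
        norm_nonneg ((h/2) • (H (V1 h) - H (Vex h)) + G h),
        mul_le_mul_of_nonneg_right hsm (norm_nonneg (V2 h - Vex h))]
    have hfinal : (fun h => V2 h - Vex h) =O[𝓝 (0:ℝ)] fun h => h ^ 3 :=
      (IsBigO.of_bound 2 (by
        filter_upwards [step2] with h hh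
        simpa using hh)).trans (hsmul.add hGO)
    exact hfinal.mono nhdsWithin_le_nhds
end

section
/- The one-sided interface values of the minmod reconstruction, $u^-_{j-1/2} = u_{j-1} + \frac{1}{2}\mathrm{mm}(\theta(u_{j-1}-u_{j-2}), \frac{u_j - u_{j-2}}{2}, \theta(u_j - u_{j-1}))$ and $u^+_{j-1/2} = u_j - \frac{1}{2}\mathrm{mm}(\theta(u_j - u_{j-1}), \frac{u_{j+1}-u_{j-1}}{2}, \theta(u_{j+1}-u_j))$ with $\theta \in [1,2]$, satisfy the local maximum principle: both $u^\pm_{j-1/2}$ lie in the interval $[\min(u_{j-2}, u_{j-1}, u_j, u_{j+1}), \max(u_{j-2}, u_{j-1}, u_j, u_{j+1})]$. -/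
/-!
For `θ ≤ 2`, the minmod value lies between `0` and `θ` times each of its outer arguments, so half
of it lies between `0` and the jump `u j - u (j - 1)`. Both interface values are therefore
`u (j - 1)` or `u j` moved towards the other one by at most the jump, i.e. they lie in
`[[u (j - 1), u j]]`.
-/

open Set

/-- The minmod function of three real arguments. -/
noncomputable def minmod3 (a b c : ℝ) : ℝ :=
  max (min a 0) (max (min b 0) (min c 0)) +
    min (max a 0) (min (max b 0) (max c 0))

theorem minmod3_comm (a b c : ℝ) : minmod3 a b c = minmod3 c b a := by
  unfold minmod3
  ac_rfl

theorem minmod3_mem_uIcc_zero_left (a b c : ℝ) : minmod3 a b c ∈ uIcc 0 a := by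
  have hneg : min a 0 ≤ max (min a 0) (max (min b 0) (min c 0)) ∧
      max (min a 0) (max (min b 0) (min c 0)) ≤ 0 :=
    ⟨le_max_left _ _, by simp⟩
  have hpos : 0 ≤ min (max a 0) (min (max b 0) (max c 0)) ∧
      min (max a 0) (min (max b 0) (max c 0)) ≤ max a 0 :=
    ⟨by simp, min_le_left _ _⟩
  rw [uIcc_comm, ← Icc_min_max]
  constructor <;> unfold minmod3 <;> linarith

theorem minmod3_mem_uIcc_zero_right (a b c : ℝ) : minmod3 a b c ∈ uIcc 0 c :=
  minmod3_comm a b c ▸ minmod3_mem_uIcc_zero_left c b a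

theorem half_mem_uIcc_zero_of_mem_uIcc_zero_mul {θ d x : ℝ} (hθ₀ : 0 ≤ θ) (hθ₂ : θ ≤ 2)
    (hx : x ∈ uIcc 0 (θ * d)) : 1 / 2 * x ∈ uIcc 0 d := by
  rcases le_total 0 d with hd | hd
  · rw [uIcc_of_le (mul_nonneg hθ₀ hd)] at hx
    rw [uIcc_of_le hd]
    constructor <;> nlinarith [hx.1, hx.2]
  · rw [uIcc_of_ge (mul_nonpos_of_nonneg_of_nonpos hθ₀ hd)] at hx
    rw [uIcc_of_ge hd]
    constructor <;> nlinarith [hx.1, hx.2]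

theorem add_mem_uIcc_of_mem_uIcc_zero_sub {w v y : ℝ} (hy : y ∈ uIcc 0 (v - w)) :
    w + y ∈ uIcc w v := by
  change y ∈ (w + ·) ⁻¹' uIcc w v
  simpa using hy

theorem sub_mem_uIcc_of_mem_uIcc_zero_sub {w v y : ℝ} (hy : y ∈ uIcc 0 (v - w)) :
    v - y ∈ uIcc w v := by
  change y ∈ (v - ·) ⁻¹' uIcc w v
  simpa [uIcc_comm] using hy

theorem add_half_minmod3_mem_uIcc {θ : ℝ} (hθ₀ : 0 ≤ θ) (hθ₂ : θ ≤ 2) (w v a b : ℝ) :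
    w + 1 / 2 * minmod3 a b (θ * (v - w)) ∈ uIcc w v :=
  add_mem_uIcc_of_mem_uIcc_zero_sub <|
    half_mem_uIcc_zero_of_mem_uIcc_zero_mul hθ₀ hθ₂ (minmod3_mem_uIcc_zero_right _ _ _)

theorem sub_half_minmod3_mem_uIcc {θ : ℝ} (hθ₀ : 0 ≤ θ) (hθ₂ : θ ≤ 2) (w v b c : ℝ) :
    v - 1 / 2 * minmod3 (θ * (v - w)) b c ∈ uIcc w v :=
  sub_mem_uIcc_of_mem_uIcc_zero_sub <|
    half_mem_uIcc_zero_of_mem_uIcc_zero_mul hθ₀ hθ₂ (minmod3_mem_uIcc_zero_left _ _ _)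

/-- Local maximum principle for the one-sided interface values of the minmod
reconstruction: for `θ ∈ [1,2]`, both `u⁻_{j-1/2}` and `u⁺_{j-1/2}` lie between
the minimum and maximum of the neighboring cell averages
`u_{j-2}, u_{j-1}, u_j, u_{j+1}`. -/
theorem minmod_interface_values_local_maximum_principle
    (θ : ℝ) (hθ : θ ∈ Icc (1:ℝ) 2) (u : ℤ → ℝ) (j : ℤ) :
    (min (u (j - 2)) (min (u (j - 1)) (min (u j) (u (j + 1)))) ≤
        u (j - 1) + (1 / 2) * minmod3 (θ * (u (j - 1) - u (j - 2)))
          ((u j - u (j - 2)) / 2) (θ * (u j - u (j - 1))) ∧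
      u (j - 1) + (1 / 2) * minmod3 (θ * (u (j - 1) - u (j - 2)))
          ((u j - u (j - 2)) / 2) (θ * (u j - u (j - 1))) ≤
        max (u (j - 2)) (max (u (j - 1)) (max (u j) (u (j + 1))))) ∧
    (min (u (j - 2)) (min (u (j - 1)) (min (u j) (u (j + 1)))) ≤
        u j - (1 / 2) * minmod3 (θ * (u j - u (j - 1)))
          ((u (j + 1) - u (j - 1)) / 2) (θ * (u (j + 1) - u j)) ∧
      u j - (1 / 2) * minmod3 (θ * (u j - u (j - 1)))
          ((u (j + 1) - u (j - 1)) / 2) (θ * (u (j + 1) - u j)) ≤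
        max (u (j - 2)) (max (u (j - 1)) (max (u j) (u (j + 1))))) := by
  obtain ⟨hθ₁, hθ₂⟩ := hθ
  have hθ₀ : 0 ≤ θ := zero_le_one.trans hθ₁
  have hjump : uIcc (u (j - 1)) (u j) ⊆
      Icc (min (u (j - 2)) (min (u (j - 1)) (min (u j) (u (j + 1)))))
        (max (u (j - 2)) (max (u (j - 1)) (max (u j) (u (j + 1))))) :=
    uIcc_subset_Icc ⟨by simp, by simp⟩ ⟨by simp, by simp⟩
  exact ⟨hjump (add_half_minmod3_mem_uIcc hθ₀ hθ₂ _ _ _ _),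
    hjump (sub_half_minmod3_mem_uIcc hθ₀ hθ₂ _ _ _ _)⟩
end
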